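/- Let f : ℝ^d → ℝ satisfy coordinate-wise L-smoothness: |f(y) − f(x) − g(x)ᵀ(y−x)| ≤ (1/2)Σᵢ Lᵢ(yᵢ−xᵢ)². Then the gradient g satisfies: for all x ∈ ℝ^d, all s with ‖s‖_∞ ≤ 1, and all ε ≥ 0, ‖g(x + εs) − g(x)‖₁ ≤ 2ε‖L‖₁. -/

import Mathlib

theorem stmt_13 (d : ℕ) (f : (Fin d → ℝ) → ℝ) (g : (Fin d → ℝ) → Fin d → ℝ)
    (L : Fin d → ℝ) (hL : ∀ i, 0 ≤ L i)
    (hsmooth : ∀ x y : Fin d → ℝ,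
      |f y - f x - ∑ i, g x i * (y i - x i)| ≤ (1 / 2) * ∑ i, L i * (y i - x i) ^ 2) :
    ∀ (x s : Fin d → ℝ) (ε : ℝ), (∀ i, |s i| ≤ 1) → 0 ≤ ε →
      ∑ i, |g (fun i => x i + ε * s i) i - g x i| ≤ 2 * ε * ∑ i, L i := by
  intro x s ε hs hε0
  have hLsum : 0 ≤ ∑ i, L i := Finset.sum_nonneg fun i _ => hL i
  rcases eq_or_lt_of_le hε0 with h0 | hε
  · simp [← h0]
  set u : Fin d → ℝ := fun i => x i + ε * s i with hu
  set σ : Fin d → ℝ := fun i => if 0 ≤ g u i - g x i then 1 else -1 with hσ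
  set w : Fin d → ℝ := fun i => ε / 2 * σ i with hw
  have hσsq : ∀ i, σ i ^ 2 = 1 := by
    intro i; simp only [hσ]; split <;> norm_num
  have habs : ∀ i, |g u i - g x i| = (g u i - g x i) * σ i := by
    intro i
    simp only [hσ]
    split
    · next h => rw [abs_of_nonneg h]; ring
    · next h => rw [abs_of_neg (lt_of_not_ge h)]; ring
  have hq1 := hsmooth x (fun i => u i + w i)
  have hq2 := hsmooth x (fun i => u i - w i)
  have hr1 := hsmooth u (fun i => u i + w i)
  have hr2 := hsmooth u (fun i => u i - w i)
  -- linear sum identities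
  have hgx1 : ∑ i, g x i * (u i + w i - x i)
      = (∑ i, g x i * (ε * s i)) + ∑ i, g x i * w i := by
    rw [← Finset.sum_add_distrib]
    refine Finset.sum_congr rfl fun i _ => ?_
    simp only [hu]; ring
  have hgx2 : ∑ i, g x i * (u i - w i - x i)
      = (∑ i, g x i * (ε * s i)) - ∑ i, g x i * w i := by
    rw [← Finset.sum_sub_distrib]
    refine Finset.sum_congr rfl fun i _ => ?_
    simp only [hu]; ring
  have hgu1 : ∑ i, g u i * (u i + w i - u i) = ∑ i, g u i * w i := by
    refine Finset.sum_congr rfl fun i _ => ?_; ring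
  have hgu2 : ∑ i, g u i * (u i - w i - u i) = -∑ i, g u i * w i := by
    rw [← Finset.sum_neg_distrib]
    refine Finset.sum_congr rfl fun i _ => ?_; ring
  -- quadratic sum bound
  have hQb : (∑ i, L i * (u i + w i - x i) ^ 2) + (∑ i, L i * (u i - w i - x i) ^ 2)
      + (∑ i, L i * (u i + w i - u i) ^ 2) + (∑ i, L i * (u i - w i - u i) ^ 2)
      ≤ 3 * ε ^ 2 * ∑ i, L i := by
    rw [← Finset.sum_add_distrib, ← Finset.sum_add_distrib, ← Finset.sum_add_distrib,
      Finset.mul_sum]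
    refine Finset.sum_le_sum fun i _ => ?_
    have hs2 : s i ^ 2 ≤ 1 := by
      have h := abs_le.mp (hs i); nlinarith [h.1, h.2]
    have hw2 : w i ^ 2 = ε ^ 2 / 4 := by
      simp only [hw]
      rw [mul_pow, hσsq i]; ring
    have hux : u i + w i - x i = ε * s i + w i := by simp only [hu]; ring
    have hux2 : u i - w i - x i = ε * s i - w i := by simp only [hu]; ring
    rw [hux, hux2]
    have hsq : (ε * s i + w i) ^ 2 + (ε * s i - w i) ^ 2 + (u i + w i - u i) ^ 2
        + (u i - w i - u i) ^ 2 = 2 * ε ^ 2 * s i ^ 2 + 4 * w i ^ 2 := by ring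
    calc L i * (ε * s i + w i) ^ 2 + L i * (ε * s i - w i) ^ 2
          + L i * (u i + w i - u i) ^ 2 + L i * (u i - w i - u i) ^ 2
        = L i * ((ε * s i + w i) ^ 2 + (ε * s i - w i) ^ 2 + (u i + w i - u i) ^ 2
            + (u i - w i - u i) ^ 2) := by ring
      _ ≤ L i * (3 * ε ^ 2) := by
          refine mul_le_mul_of_nonneg_left ?_ (hL i)
          rw [hsq, hw2]
          have h2 : ε ^ 2 * s i ^ 2 ≤ ε ^ 2 * 1 :=
            mul_le_mul_of_nonneg_left hs2 (sq_nonneg ε)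
          linarith
      _ = 3 * ε ^ 2 * L i := by ring
  -- sum of |g u i - g x i| rewritten via w
  have hws : ∑ i, (g u i - g x i) * w i = ε / 2 * ∑ i, |g u i - g x i| := by
    rw [Finset.mul_sum]
    refine Finset.sum_congr rfl fun i _ => ?_
    rw [habs i]; simp only [hw]; ring
  have hVW : ∑ i, (g u i - g x i) * w i
      = (∑ i, g u i * w i) - ∑ i, g x i * w i := by
    rw [← Finset.sum_sub_distrib]
    refine Finset.sum_congr rfl fun i _ => ?_; ring
  obtain ⟨hq1l, hq1r⟩ := abs_le.mp hq1
  obtain ⟨hq2l, hq2r⟩ := abs_le.mp hq2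
  obtain ⟨hr1l, hr1r⟩ := abs_le.mp hr1
  obtain ⟨hr2l, hr2r⟩ := abs_le.mp hr2
  have hmain : ε * ∑ i, |g u i - g x i| ≤ (3 / 2) * ε ^ 2 * ∑ i, L i := by
    have h2 : 2 * ((∑ i, g u i * w i) - ∑ i, g x i * w i)
        ≤ (1 / 2) * (3 * ε ^ 2 * ∑ i, L i) := by
      linarith [hq1r, hq2l, hr1l, hr2r, hgx1, hgx2, hgu1, hgu2, hQb]
    have h3 : ε * ∑ i, |g u i - g x i|
        = 2 * ((∑ i, g u i * w i) - ∑ i, g x i * w i) := by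
      rw [← hVW, hws]; ring
    linarith
  have h5 : ∑ i, |g u i - g x i| ≤ 3 / 2 * ε * ∑ i, L i := by
    rw [← mul_le_mul_iff_of_pos_left hε]
    calc ε * ∑ i, |g u i - g x i| ≤ 3 / 2 * ε ^ 2 * ∑ i, L i := hmain
      _ = ε * (3 / 2 * ε * ∑ i, L i) := by ring
  have h6 : 0 ≤ ε * ∑ i, L i := mul_nonneg hε0 hLsum
  linarith [h5, h6]
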